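/- arXiv:0707.3229 — 9 statements merged into one kernel-verified Lean document; each statement's English description precedes it below -/
import Mathlib

section
/- Let A be a unital normed algebra and let L be a strongly Leibniz seminorm on A. Set A^f = {a ∈ A : L(a) < ∞}. Then A^f is a unital subalgebra of A, and for any a ∈ A^f, a is invertible in A^f if and only if a is invertible in A; consequently, for every a ∈ A^f the spectrum of a relative to A^f equals the spectrum of a relative to A (A^f is a spectrally stable subalgebra of A). -/
/-!
Finiteness of `L` is preserved by sums, scalar multiples and, by the Leibniz rule, products, so
`A^f` is a subalgebra. The bound `L(u⁻¹) ≤ ‖u⁻¹‖² L(u)` makes it closed under inverses taken in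
`A`, and for a subalgebra, inverse-closedness is exactly what equality of spectra requires.
-/

open scoped ENNReal

def IsESeminorm {A : Type*} [NormedRing A] [NormedAlgebra ℂ A] (L : A → ℝ≥0∞) : Prop :=
  L 0 = 0 ∧ (∀ t : ℂ, t ≠ 0 → ∀ a : A, L (t • a) = (‖t‖₊ : ℝ≥0∞) * L a) ∧
    ∀ a b : A, L (a + b) ≤ L a + L b

def IsLeibniz {A : Type*} [NormedRing A] [NormedAlgebra ℂ A] (L : A → ℝ≥0∞) : Prop :=
  ∀ a b : A, L (a * b) ≤ L a * (‖b‖₊ : ℝ≥0∞) + (‖a‖₊ : ℝ≥0∞) * L b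

def IsStronglyLeibniz {A : Type*} [NormedRing A] [NormedAlgebra ℂ A] (L : A → ℝ≥0∞) : Prop :=
  IsLeibniz L ∧ L 1 = 0 ∧
    ∀ u : Aˣ, L ((u⁻¹ : Aˣ) : A) ≤ ((‖((u⁻¹ : Aˣ) : A)‖₊ : ℝ≥0∞)) ^ 2 * L (u : A)

namespace Subalgebra

variable {R A : Type*} [CommRing R] [Ring A] [Algebra R A]

theorem isUnit_iff_isUnit_coe_of_inv_mem (S : Subalgebra R A)
    (hS : ∀ u : Aˣ, (u : A) ∈ S → (↑u⁻¹ : A) ∈ S) (a : S) : IsUnit a ↔ IsUnit (a : A) := by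
  refine ⟨fun ha => ha.map S.val, ?_⟩
  rintro ⟨u, hu⟩
  have hinv : (↑u⁻¹ : A) ∈ S := hS u (hu ▸ a.2)
  exact ⟨⟨a, ⟨_, hinv⟩, Subtype.ext (by simp [← hu]), Subtype.ext (by simp [← hu])⟩, rfl⟩

theorem spectrum_eq_of_isUnit_iff (S : Subalgebra R A)
    (hS : ∀ a : S, IsUnit a ↔ IsUnit (a : A)) (a : S) : spectrum R a = spectrum R (a : A) := by
  ext r
  rw [spectrum.mem_iff, spectrum.mem_iff, hS]
  rfl

end Subalgebra

namespace IsESeminorm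

variable {A : Type*} [NormedRing A] [NormedAlgebra ℂ A] {L : A → ℝ≥0∞}

theorem add_lt_top (hL : IsESeminorm L) {a b : A} (ha : L a < ⊤) (hb : L b < ⊤) :
    L (a + b) < ⊤ :=
  (hL.2.2 a b).trans_lt (ENNReal.add_lt_top.2 ⟨ha, hb⟩)

theorem smul_lt_top (hL : IsESeminorm L) (t : ℂ) {a : A} (ha : L a < ⊤) : L (t • a) < ⊤ := by
  rcases eq_or_ne t 0 with rfl | ht
  · rw [zero_smul, hL.1]
    exact ENNReal.zero_lt_top
  · rw [hL.2.1 t ht a]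
    exact ENNReal.mul_lt_top ENNReal.coe_lt_top ha

end IsESeminorm

section FinitePart

variable {A : Type*} [NormedRing A] [NormedAlgebra ℂ A] {L : A → ℝ≥0∞}

theorem IsLeibniz.mul_lt_top (hL : IsLeibniz L) {a b : A} (ha : L a < ⊤) (hb : L b < ⊤) :
    L (a * b) < ⊤ :=
  (hL a b).trans_lt <| ENNReal.add_lt_top.2
    ⟨ENNReal.mul_lt_top ha ENNReal.coe_lt_top, ENNReal.mul_lt_top ENNReal.coe_lt_top hb⟩

/-- The subalgebra `A^f = {a | L a < ∞}`. -/
def finitePart (hsem : IsESeminorm L) (hleib : IsLeibniz L) (hone : L 1 = 0) :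
    Subalgebra ℂ A where
  carrier := {a | L a < ⊤}
  mul_mem' := hleib.mul_lt_top
  add_mem' := hsem.add_lt_top
  algebraMap_mem' t := by
    change L (algebraMap ℂ A t) < ⊤
    rw [Algebra.algebraMap_eq_smul_one]
    exact hsem.smul_lt_top t (hone ▸ ENNReal.zero_lt_top)

theorem mem_finitePart {hsem : IsESeminorm L} {hleib : IsLeibniz L} {hone : L 1 = 0} {a : A} :
    a ∈ finitePart hsem hleib hone ↔ L a < ⊤ :=
  Iff.rfl

theorem IsStronglyLeibniz.inv_mem_finitePart (hsem : IsESeminorm L) (hsl : IsStronglyLeibniz L)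
    (u : Aˣ) (hu : (u : A) ∈ finitePart hsem hsl.1 hsl.2.1) :
    (↑u⁻¹ : A) ∈ finitePart hsem hsl.1 hsl.2.1 :=
  (hsl.2.2 u).trans_lt (ENNReal.mul_lt_top (ENNReal.pow_lt_top ENNReal.coe_lt_top) hu)

end FinitePart

theorem finite_part_spectrally_stable_general {A : Type*} [NormedRing A]
    [NormedAlgebra ℂ A] (L : A → ℝ≥0∞) (hsem : IsESeminorm L) (hsl : IsStronglyLeibniz L) :
    ∃ S : Subalgebra ℂ A, (∀ a : A, a ∈ S ↔ L a < ⊤) ∧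
      (∀ a : S, IsUnit a ↔ IsUnit (a : A)) ∧
      (∀ a : S, spectrum ℂ a = spectrum ℂ (a : A)) := by
  set S := finitePart hsem hsl.1 hsl.2.1
  have hunit : ∀ a : S, IsUnit a ↔ IsUnit (a : A) :=
    S.isUnit_iff_isUnit_coe_of_inv_mem (hsl.inv_mem_finitePart hsem)
  exact ⟨S, fun _ => mem_finitePart, hunit, S.spectrum_eq_of_isUnit_iff hunit⟩

/-- If `L` is a strongly Leibniz seminorm on a unital normed algebra `A`, then
`A^f = {a : L(a) < ∞}` is a unital subalgebra of `A`, an element of `A^f` is invertible in `A^f`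
iff it is invertible in `A`, and the spectrum of any element of `A^f` relative to `A^f` equals
its spectrum relative to `A`. -/
theorem finite_part_spectrally_stable {A : Type*} [NormedRing A] [NormOneClass A]
    [NormedAlgebra ℂ A] (L : A → ℝ≥0∞) (hsem : IsESeminorm L) (hsl : IsStronglyLeibniz L) :
    ∃ S : Subalgebra ℂ A, (∀ a : A, a ∈ S ↔ L a < ⊤) ∧
      (∀ a : S, IsUnit a ↔ IsUnit (a : A)) ∧
      (∀ a : S, spectrum ℂ a = spectrum ℂ (a : A)) :=
  finite_part_spectrally_stable_general L hsem hsl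
end

section
/- Let A be a unital normed algebra and let α be an isometric algebra automorphism of A. Define L(a) = ‖α(a) − a‖. Then: (i) L is a strongly Leibniz seminorm on A, i.e. L(1) = 0, L(ab) ≤ L(a)‖b‖ + ‖a‖L(b) for all a, b ∈ A, and L(a⁻¹) ≤ ‖a⁻¹‖²·L(a) for every invertible a ∈ A; (ii) if π denotes the left regular representation of A on itself (π(a)b = ab) and operators on A are given the operator norm, then ‖α∘π(a) − π(a)∘α‖ = ‖α(a) − a‖ for every a ∈ A. -/
/-!
The identities `α(ab) - ab = (α a - a) α b + a (α b - b)` and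
`α(u⁻¹) - u⁻¹ = α(u⁻¹) (u - α u) u⁻¹` give the two Leibniz bounds by submultiplicativity and
`‖α x‖ = ‖x‖`. The commutator `α ∘ π(a) - π(a) ∘ α` is `b ↦ (α a - a) α b`, i.e. left
multiplication by `α a - a` after the surjective isometry `α`; its operator norm is therefore that
of left multiplication, which is `‖α a - a‖` because `‖1‖ = 1`.
-/

theorem norm_map_mul_sub_mul_le {A F : Type*} [NonUnitalNormedRing A] [FunLike F A A]
    [MulHomClass F A A] (f : F) (hf : ∀ a, ‖f a‖ = ‖a‖) (a b : A) :
    ‖f (a * b) - a * b‖ ≤ ‖f a - a‖ * ‖b‖ + ‖a‖ * ‖f b - b‖ := by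
  have hsplit : f (a * b) - a * b = (f a - a) * f b + a * (f b - b) := by
    rw [map_mul]; noncomm_ring
  calc ‖f (a * b) - a * b‖ ≤ ‖(f a - a) * f b‖ + ‖a * (f b - b)‖ := hsplit ▸ norm_add_le _ _
    _ ≤ ‖f a - a‖ * ‖f b‖ + ‖a‖ * ‖f b - b‖ := by gcongr <;> exact norm_mul_le _ _
    _ = ‖f a - a‖ * ‖b‖ + ‖a‖ * ‖f b - b‖ := by rw [hf]

theorem norm_map_inv_sub_inv_le {A F : Type*} [NormedRing A] [FunLike F A A]
    [MonoidHomClass F A A] (f : F) (hf : ∀ a, ‖f a‖ = ‖a‖) (u : Aˣ) :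
    ‖f ↑u⁻¹ - ↑u⁻¹‖ ≤ ‖(↑u⁻¹ : A)‖ ^ 2 * ‖f u - u‖ := by
  have hsplit : f ↑u⁻¹ - ↑u⁻¹ = f ↑u⁻¹ * (u - f u) * ↑u⁻¹ := by
    have hinv : f ↑u⁻¹ * f u = 1 := by rw [← map_mul, Units.inv_mul, map_one]
    rw [mul_sub, sub_mul, hinv, one_mul, mul_assoc, Units.mul_inv, mul_one]
  calc ‖f ↑u⁻¹ - ↑u⁻¹‖ ≤ ‖f ↑u⁻¹‖ * ‖(u : A) - f u‖ * ‖(↑u⁻¹ : A)‖ :=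
        hsplit ▸ norm_mul₃_le
    _ = ‖(↑u⁻¹ : A)‖ ^ 2 * ‖f u - u‖ := by rw [hf, norm_sub_rev]; ring

def AlgEquiv.toLinearIsometryEquiv {𝕜 A B : Type*} [NormedField 𝕜] [SeminormedRing A]
    [SeminormedRing B] [NormedAlgebra 𝕜 A] [NormedAlgebra 𝕜 B] (α : A ≃ₐ[𝕜] B)
    (hα : ∀ a, ‖α a‖ = ‖a‖) : A ≃ₗᵢ[𝕜] B :=
  { α.toLinearEquiv with norm_map' := hα }

@[simp]
theorem AlgEquiv.coe_toLinearIsometryEquiv {𝕜 A B : Type*} [NormedField 𝕜] [SeminormedRing A]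
    [SeminormedRing B] [NormedAlgebra 𝕜 A] [NormedAlgebra 𝕜 B] (α : A ≃ₐ[𝕜] B)
    (hα : ∀ a, ‖α a‖ = ‖a‖) : ⇑(α.toLinearIsometryEquiv hα) = α :=
  rfl

/-- For an isometric algebra automorphism `α` of a unital normed algebra `A`, the seminorm
`L(a) = ‖α(a) − a‖` is strongly Leibniz, and moreover for the left regular representation `π`
the operator norm of `α ∘ π(a) − π(a) ∘ α` equals `‖α(a) − a‖`. -/
theorem stronglyLeibniz_of_isometric_automorphism {A : Type*} [NormedRing A] [NormOneClass A]
    [NormedAlgebra ℂ A]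
    (α : A ≃ₐ[ℂ] A) (hiso : ∀ a : A, ‖α a‖ = ‖a‖)
    (L : A → ℝ) (hL : ∀ a, L a = ‖α a - a‖) :
    (L 1 = 0 ∧
     (∀ a b : A, L (a * b) ≤ L a * ‖b‖ + ‖a‖ * L b) ∧
     (∀ u : Aˣ, L ((u⁻¹ : Aˣ) : A) ≤ ‖((u⁻¹ : Aˣ) : A)‖ ^ 2 * L (u : A))) ∧
    (∀ a : A, ∃ T : A →L[ℂ] A, (∀ b : A, T b = α (a * b) - a * α b) ∧ ‖T‖ = ‖α a - a‖) := by
  refine ⟨⟨by simp [hL], fun a b => ?_, fun u => ?_⟩, fun a => ?_⟩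
  · simpa only [hL] using norm_map_mul_sub_mul_le α hiso a b
  · simpa only [hL] using norm_map_inv_sub_inv_le α hiso u
  · refine ⟨(ContinuousLinearMap.mul ℂ A (α a - a)).comp
      (α.toLinearIsometryEquiv hiso : A →L[ℂ] A), fun b => ?_, ?_⟩
    · simp
    · rw [ContinuousLinearMap.opNorm_comp_linearIsometryEquiv,
        ContinuousLinearMap.opNorm_mul_apply]
end

section
/- Let G be a group, let A be a unital normed algebra, let α be an action of G on A by isometric algebra automorphisms, and let ℓ be a length function on G. Define L on A by L(a) = sup{‖α_x(a) − a‖/ℓ(x) : x ∈ G, x ≠ e}, with values in [0,∞]. Then L is a lower semicontinuous strongly Leibniz seminorm on A. -/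
open scoped ENNReal

/-! Each term `a ↦ ‖α_x a - a‖ / ℓ(x)` of the supremum is a constant multiple of
`a ↦ ‖α_x a - a‖`, which is a strongly Leibniz seminorm because `σ = α_x` is an isometric
algebra automorphism: `σ(ab) - ab = (σa - a) σb + a (σb - b)` and
`σ(u⁻¹) - u⁻¹ = u⁻¹ (u - σu) σ(u⁻¹)`. All these properties pass to nonnegative multiples and to
pointwise suprema, and a supremum of continuous functions is lower semicontinuous. -/

section Operations

variable {A : Type*} [NormedRing A] [NormedAlgebra ℂ A] {L : A → ℝ≥0∞}

theorem IsESeminorm.const_mul (hL : IsESeminorm L) (c : ℝ≥0∞) : IsESeminorm fun a => c * L a := by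
  obtain ⟨h0, hsmul, hadd⟩ := hL
  refine ⟨by simp [h0], fun t ht a => ?_, fun a b => ?_⟩
  · simp only [hsmul t ht, mul_left_comm]
  · simp only [← mul_add]
    exact mul_le_mul_right (hadd a b) c

theorem IsLeibniz.const_mul (hL : IsLeibniz L) (c : ℝ≥0∞) : IsLeibniz fun a => c * L a := by
  intro a b
  calc c * L (a * b) ≤ c * (L a * ‖b‖₊ + ‖a‖₊ * L b) := by gcongr; exact hL a b
    _ = c * L a * ‖b‖₊ + ‖a‖₊ * (c * L b) := by ring

theorem IsStronglyLeibniz.const_mul (hL : IsStronglyLeibniz L) (c : ℝ≥0∞) :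
    IsStronglyLeibniz fun a => c * L a := by
  obtain ⟨hleib, h1, hinv⟩ := hL
  refine ⟨hleib.const_mul c, by simp [h1], fun u => ?_⟩
  simp only [mul_left_comm _ c]
  exact mul_le_mul_right (hinv u) c

variable {ι : Sort*} {L : ι → A → ℝ≥0∞}

theorem IsESeminorm.iSup (hL : ∀ i, IsESeminorm (L i)) : IsESeminorm fun a => ⨆ i, L i a := by
  refine ⟨by simp [fun i => (hL i).1], fun t ht a => ?_, fun a b => iSup_le fun i => ?_⟩
  · simp only [(hL _).2.1 t ht, ENNReal.mul_iSup]
  · exact ((hL i).2.2 a b).trans (add_le_add (le_iSup (L · a) i) (le_iSup (L · b) i))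

theorem IsLeibniz.iSup (hL : ∀ i, IsLeibniz (L i)) : IsLeibniz fun a => ⨆ i, L i a := by
  intro a b
  refine iSup_le fun i => (hL i a b).trans ?_
  gcongr
  · exact le_iSup (L · a) i
  · exact le_iSup (L · b) i

theorem IsStronglyLeibniz.iSup (hL : ∀ i, IsStronglyLeibniz (L i)) :
    IsStronglyLeibniz fun a => ⨆ i, L i a := by
  refine ⟨IsLeibniz.iSup fun i => (hL i).1, by simp [fun i => (hL i).2.1], fun u => ?_⟩
  rw [ENNReal.mul_iSup]
  exact iSup_mono fun i => (hL i).2.2 u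

end Operations

section Automorphism

variable {A F : Type*} [NormedRing A] [FunLike F A A]

theorem nnnorm_map_mul_sub_le [RingHomClass F A A] {σ : F} (hσ : ∀ a, ‖σ a‖ = ‖a‖)
    (a b : A) : ‖σ (a * b) - a * b‖₊ ≤ ‖σ a - a‖₊ * ‖b‖₊ + ‖a‖₊ * ‖σ b - b‖₊ := by
  have hderiv : σ (a * b) - a * b = (σ a - a) * σ b + a * (σ b - b) := by
    rw [map_mul]; noncomm_ring
  calc ‖σ (a * b) - a * b‖₊ ≤ ‖σ a - a‖₊ * ‖σ b‖₊ + ‖a‖₊ * ‖σ b - b‖₊ := by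
        rw [hderiv]
        exact (nnnorm_add_le _ _).trans (add_le_add (nnnorm_mul_le _ _) (nnnorm_mul_le _ _))
    _ = ‖σ a - a‖₊ * ‖b‖₊ + ‖a‖₊ * ‖σ b - b‖₊ := by
        rw [show ‖σ b‖₊ = ‖b‖₊ from NNReal.eq (hσ b)]

theorem nnnorm_map_inv_sub_le [RingHomClass F A A] {σ : F} (hσ : ∀ a, ‖σ a‖ = ‖a‖)
    (u : Aˣ) : ‖σ ↑u⁻¹ - ↑u⁻¹‖₊ ≤ ‖(↑u⁻¹ : A)‖₊ ^ 2 * ‖σ u - u‖₊ := by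
  have hunit : σ u * σ ↑u⁻¹ = 1 := by rw [← map_mul, Units.mul_inv, map_one]
  have hconj : σ ↑u⁻¹ - ↑u⁻¹ = ↑u⁻¹ * (u - σ u) * σ ↑u⁻¹ := by
    rw [mul_sub, Units.inv_mul, sub_mul, one_mul, mul_assoc, hunit, mul_one]
  calc ‖σ ↑u⁻¹ - ↑u⁻¹‖₊ ≤ ‖(↑u⁻¹ : A)‖₊ * ‖(u : A) - σ u‖₊ * ‖σ ↑u⁻¹‖₊ := by
        rw [hconj]
        exact (nnnorm_mul_le _ _).trans (mul_le_mul_left (nnnorm_mul_le _ _) _)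
    _ = ‖(↑u⁻¹ : A)‖₊ ^ 2 * ‖σ u - u‖₊ := by
        rw [show ‖σ ↑u⁻¹‖₊ = ‖(↑u⁻¹ : A)‖₊ from NNReal.eq (hσ _), ← nnnorm_neg (σ u - u), neg_sub]
        ring

variable [NormedAlgebra ℂ A]

theorem isESeminorm_enorm_map_sub [LinearMapClass F ℂ A A] (σ : F) :
    IsESeminorm fun a => ‖σ a - a‖ₑ := by
  refine ⟨by simp, fun t _ a => ?_, fun a b => ?_⟩ <;> dsimp only
  · rw [map_smul, ← smul_sub, enorm_smul, enorm_eq_nnnorm t]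
  · rw [map_add, add_sub_add_comm]
    exact enorm_add_le _ _

theorem isStronglyLeibniz_enorm_map_sub [RingHomClass F A A] {σ : F} (hσ : ∀ a, ‖σ a‖ = ‖a‖) :
    IsStronglyLeibniz fun a => ‖σ a - a‖ₑ := by
  refine ⟨fun a b => ?_, by simp, fun u => ?_⟩
  · simp only [enorm_eq_nnnorm]
    exact_mod_cast nnnorm_map_mul_sub_le hσ a b
  · simp only [enorm_eq_nnnorm]
    exact_mod_cast nnnorm_map_inv_sub_le hσ u

end Automorphism

theorem stronglyLeibniz_of_action_general {G : Type*} [Group G]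
    {A : Type*} [NormedRing A] [NormedAlgebra ℂ A]
    (α : G → A ≃ₐ[ℂ] A)
    (hiso : ∀ (x : G) (a : A), ‖α x a‖ = ‖a‖)
    (ℓ : G → ℝ)
    (L : A → ℝ≥0∞)
    (hL : ∀ a, L a = ⨆ x : {x : G // x ≠ 1}, ENNReal.ofReal (‖α (x : G) a - a‖ / ℓ (x : G))) :
    IsESeminorm L ∧ IsStronglyLeibniz L ∧ IsClosed {a : A | L a ≤ 1} := by
  have hterm (x : G) (a : A) :
      ENNReal.ofReal (‖α x a - a‖ / ℓ x) = ENNReal.ofReal (ℓ x)⁻¹ * ‖α x a - a‖ₑ := by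
    rw [div_eq_inv_mul, ENNReal.ofReal_mul' (norm_nonneg _), ofReal_norm]
  have hcont (x : G) : Continuous fun a => ENNReal.ofReal (‖α x a - a‖ / ℓ x) :=
    have hαx : Continuous (α x) := (AddMonoidHomClass.isometry_of_norm (α x) (hiso x)).continuous
    ENNReal.continuous_ofReal.comp ((hαx.sub continuous_id).norm.div_const _)
  obtain rfl : L = fun a => ⨆ x : {x : G // x ≠ 1}, ENNReal.ofReal (‖α x a - a‖ / ℓ x) := funext hL
  refine ⟨?_, ?_, ?_⟩
  · simp only [hterm]
    exact IsESeminorm.iSup fun x => (isESeminorm_enorm_map_sub (α x)).const_mul _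
  · simp only [hterm]
    exact IsStronglyLeibniz.iSup fun x => (isStronglyLeibniz_enorm_map_sub (hiso x)).const_mul _
  · exact (lowerSemicontinuous_iSup fun x : {x : G // x ≠ 1} =>
      (hcont x).lowerSemicontinuous).isClosed_preimage 1

/-- Given an action `α` of a group `G` on a unital normed algebra `A` by isometric algebra
automorphisms, and a length function `ℓ` on `G`, the seminorm
`L(a) = sup {‖α_x(a) − a‖ / ℓ(x) : x ≠ e}` is a lower semicontinuous strongly Leibniz
seminorm on `A`. -/
theorem stronglyLeibniz_of_action {G : Type*} [Group G]
    {A : Type*} [NormedRing A] [NormOneClass A] [NormedAlgebra ℂ A]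
    (α : G → A ≃ₐ[ℂ] A)
    (hmul : ∀ x y : G, ∀ a : A, α (x * y) a = α x (α y a))
    (hone : ∀ a : A, α 1 a = a)
    (hiso : ∀ (x : G) (a : A), ‖α x a‖ = ‖a‖)
    (ℓ : G → ℝ)
    (hℓnonneg : ∀ x, 0 ≤ ℓ x)
    (hℓzero : ∀ x, ℓ x = 0 ↔ x = 1)
    (hℓinv : ∀ x, ℓ x⁻¹ = ℓ x)
    (hℓsub : ∀ x y, ℓ (x * y) ≤ ℓ x + ℓ y)
    (L : A → ℝ≥0∞)
    (hL : ∀ a, L a = ⨆ x : {x : G // x ≠ 1}, ENNReal.ofReal (‖α (x : G) a - a‖ / ℓ (x : G))) :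
    IsESeminorm L ∧ IsStronglyLeibniz L ∧ IsClosed {a : A | L a ≤ 1} :=
  stronglyLeibniz_of_action_general α hiso ℓ L hL
end

section
/- Let A be a unital normed algebra with completion Ā, and let L be a Leibniz seminorm on A. Let L̄ be the closure of L on Ā, i.e. the Minkowski functional L̄(c) = inf{r > 0 : c ∈ r·K̄} (with inf ∅ = ∞), where K̄ is the closure in Ā of {a ∈ A : L(a) ≤ 1}. Then L̄ is a Leibniz seminorm on Ā: L̄(cd) ≤ L̄(c)‖d‖ + ‖c‖L̄(d) for all c, d ∈ Ā. -/
/-!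
For `a, b` in the unit ball `{L ≤ 1}`, the Leibniz inequality gives `L (a * b) ≤ ‖a‖ + ‖b‖`, so
the normalized product `(‖a‖ + ‖b‖)⁻¹ • (a * b)` lies in the unit ball again. The normalized
product is continuous away from `‖a‖ + ‖b‖ = 0` and `ι` is isometric, so `K̄` inherits this
property. If `c = s • k` and `d = t • k'` with `k, k' ∈ K̄`, then `c * d` is
`s * t * (‖k‖ + ‖k'‖) = s * ‖d‖ + ‖c‖ * t` times the normalized product of `k` and `k'`, whence
`L̄ (c * d) ≤ s * ‖d‖ + ‖c‖ * t`; taking the infimum over `s` and `t` gives the Leibniz inequality.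
-/

open scoped ENNReal

theorem ENNReal.le_add_mul_sInf {P a b : ℝ≥0∞} {T : Set ℝ≥0∞} (hb₀ : b ≠ 0) (hb : b ≠ ∞)
    (h : ∀ r ∈ T, P ≤ a + b * r) : P ≤ a + b * sInf T := by
  simp_rw [sInf_eq_iInf, ENNReal.mul_iInf_of_ne hb₀ hb, ENNReal.add_iInf]
  exact le_iInf₂ h

section Gauge

variable {B : Type*} [NormedRing B] [NormedAlgebra ℝ B] {S : Set B}

def IsLeibnizBall (S : Set B) : Prop :=
  ∀ k ∈ S, ∀ k' ∈ S, 0 < ‖k‖ + ‖k'‖ → (‖k‖ + ‖k'‖)⁻¹ • (k * k') ∈ S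

theorem IsLeibnizBall.closure (hS : IsLeibnizBall S) : IsLeibnizBall (closure S) := by
  intro k hk k' hk' hpos
  let U : Set (B × B) := {p | 0 < ‖p.1‖ + ‖p.2‖}
  have hU : IsOpen U := isOpen_lt continuous_const (by fun_prop)
  have hmem : (k, k') ∈ _root_.closure (U ∩ S ×ˢ S) :=
    hU.inter_closure ⟨hpos, by rw [closure_prod_eq]; exact ⟨hk, hk'⟩⟩
  have hcont : ContinuousAt (fun p : B × B => (‖p.1‖ + ‖p.2‖)⁻¹ • (p.1 * p.2)) (k, k') :=
    ((continuousAt_fst.norm.add continuousAt_snd.norm).inv₀ hpos.ne').smul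
      (continuousAt_fst.mul continuousAt_snd)
  have himage := mem_closure_image hcont hmem
  refine closure_mono ?_ himage
  rintro _ ⟨⟨a, b⟩, ⟨hab, ha, hb⟩, rfl⟩
  exact hS a ha b hb hab

theorem IsLeibnizBall.image {A : Type*} [NormedRing A] [NormedAlgebra ℝ A] {S : Set A}
    (hS : IsLeibnizBall S) (f : A →ₐ[ℝ] B) (hf : ∀ a, ‖f a‖ = ‖a‖) :
    IsLeibnizBall (f '' S) := by
  rintro _ ⟨a, ha, rfl⟩ _ ⟨b, hb, rfl⟩ hpos
  rw [hf, hf] at hpos ⊢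
  exact ⟨_, hS a ha b hb hpos, by rw [map_smul, map_mul]⟩

noncomputable def posGauge (S : Set B) (c : B) : ℝ≥0∞ :=
  sInf {r | ∃ s : ℝ, 0 < s ∧ r = ENNReal.ofReal s ∧ ∃ k ∈ S, c = s • k}

theorem posGauge_smul_le {s : ℝ} {k : B} (hs : 0 < s) (hk : k ∈ S) :
    posGauge S (s • k) ≤ ENNReal.ofReal s :=
  sInf_le ⟨s, hs, rfl, k, hk, rfl⟩

theorem posGauge_zero (h0 : (0 : B) ∈ S) : posGauge S 0 = 0 := by
  refine le_antisymm (ENNReal.le_of_forall_pos_le_add fun ε hε _ => ?_) bot_le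
  simpa using posGauge_smul_le (S := S) (s := ε) hε h0

theorem IsLeibnizBall.posGauge_smul_mul_smul_le (hS : IsLeibnizBall S) (h0 : (0 : B) ∈ S)
    {s t : ℝ} {k k' : B} (hs : 0 < s) (ht : 0 < t) (hk : k ∈ S) (hk' : k' ∈ S) :
    posGauge S ((s • k) * (t • k')) ≤
      ENNReal.ofReal s * ‖t • k'‖ₑ + ‖s • k‖ₑ * ENNReal.ofReal t := by
  set m := ‖k‖ + ‖k'‖ with hm_def
  rcases (add_nonneg (norm_nonneg k) (norm_nonneg k')).eq_or_lt with hm | hm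
  · obtain ⟨rfl, rfl⟩ : k = 0 ∧ k' = 0 := by
      simpa using (add_eq_zero_iff_of_nonneg (norm_nonneg k) (norm_nonneg k')).1 hm.symm
    simp [posGauge_zero h0]
  have hprod : (s • k) * (t • k') = (s * t * m) • (m⁻¹ • (k * k')) := by
    rw [smul_mul_smul_comm, smul_smul, mul_assoc (s * t), mul_inv_cancel₀ hm.ne', mul_one]
  calc posGauge S ((s • k) * (t • k'))
      ≤ ENNReal.ofReal (s * t * m) := hprod ▸ posGauge_smul_le (by positivity) (hS k hk k' hk' hm)
    _ = ENNReal.ofReal s * ‖t • k'‖ₑ + ‖s • k‖ₑ * ENNReal.ofReal t := by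
      simp only [← ofReal_norm, norm_smul, Real.norm_of_nonneg hs.le, Real.norm_of_nonneg ht.le]
      rw [← ENNReal.ofReal_mul hs.le, ← ENNReal.ofReal_mul (by positivity),
        ← ENNReal.ofReal_add (by positivity) (by positivity), hm_def]
      congr 1; ring

theorem IsLeibnizBall.posGauge_mul_le (hS : IsLeibnizBall S) (h0 : (0 : B) ∈ S) (c d : B) :
    posGauge S (c * d) ≤ posGauge S c * ‖d‖ₑ + ‖c‖ₑ * posGauge S d := by
  rcases eq_or_ne c 0 with rfl | hc
  · simp [posGauge_zero h0]
  rcases eq_or_ne d 0 with rfl | hd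
  · simp [posGauge_zero h0]
  refine ENNReal.le_add_mul_sInf (enorm_ne_zero.2 hc) enorm_ne_top ?_
  rintro _ ⟨t, ht, rfl, k', hk', rfl⟩
  rw [add_comm, mul_comm (posGauge S c)]
  refine ENNReal.le_add_mul_sInf (enorm_ne_zero.2 hd) enorm_ne_top ?_
  rintro _ ⟨s, hs, rfl, k, hk, rfl⟩
  rw [add_comm, mul_comm ‖t • k'‖ₑ]
  exact hS.posGauge_smul_mul_smul_le h0 hs ht hk hk'

end Gauge

theorem isLeibnizBall_setOf_le_one {A : Type*} [NormedRing A] [NormedAlgebra ℂ A]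
    {L : A → ℝ≥0∞} (hsem : IsESeminorm L) (hleib : IsLeibniz L) :
    IsLeibnizBall {a : A | L a ≤ 1} := by
  intro a ha b hb hpos
  set m := ‖a‖ + ‖b‖
  have hmul : L (a * b) ≤ ENNReal.ofReal m :=
    calc L (a * b) ≤ L a * ‖b‖₊ + ‖a‖₊ * L b := hleib a b
      _ ≤ 1 * ‖b‖₊ + ‖a‖₊ * 1 := by gcongr <;> assumption
      _ = ENNReal.ofReal m := by
        rw [one_mul, mul_one, add_comm, ENNReal.ofReal_add (norm_nonneg _) (norm_nonneg _),
          ofReal_norm, ofReal_norm, enorm_eq_nnnorm, enorm_eq_nnnorm]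
  calc L (m⁻¹ • (a * b)) = ENNReal.ofReal m⁻¹ * L (a * b) := by
        rw [← Complex.coe_smul, hsem.2.1 _ (by simpa using hpos.ne'),
          Complex.nnnorm_real, ← enorm_eq_nnnorm, Real.enorm_eq_ofReal (by positivity)]
    _ ≤ ENNReal.ofReal m⁻¹ * ENNReal.ofReal m := by gcongr
    _ = 1 := by
      rw [← ENNReal.ofReal_mul (by positivity), inv_mul_cancel₀ hpos.ne', ENNReal.ofReal_one]

theorem closure_of_leibniz_is_leibniz_general {A : Type*} [NormedRing A]
    [NormedAlgebra ℂ A]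
    {Abar : Type*} [NormedRing Abar] [NormedAlgebra ℂ Abar]
    (ι : A →ₐ[ℂ] Abar) (hisometric : ∀ a : A, ‖ι a‖ = ‖a‖)
    (L : A → ℝ≥0∞) (hsem : IsESeminorm L) (hleib : IsLeibniz L)
    (Kbar : Set Abar) (hK : Kbar = closure (ι '' {a : A | L a ≤ 1}))
    (Lbar : Abar → ℝ≥0∞)
    (hLbar : ∀ c : Abar, Lbar c = sInf {r : ℝ≥0∞ | ∃ s : ℝ, 0 < s ∧ r = ENNReal.ofReal s ∧
        ∃ k ∈ Kbar, c = (s : ℂ) • k}) :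
    ∀ c d : Abar, Lbar (c * d) ≤ Lbar c * (‖d‖₊ : ℝ≥0∞) + (‖c‖₊ : ℝ≥0∞) * Lbar d := by
  have hball : IsLeibnizBall Kbar :=
    hK ▸ ((isLeibnizBall_setOf_le_one hsem hleib).image (ι.restrictScalars ℝ) hisometric).closure
  have h0 : (0 : Abar) ∈ Kbar := hK ▸ subset_closure ⟨0, by simp [hsem.1], map_zero ι⟩
  have hgauge : Lbar = posGauge Kbar := funext fun c => by
    simp only [hLbar, posGauge, ← Complex.coe_smul]
  exact hgauge ▸ hball.posGauge_mul_le h0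

/-- Let `A` be a unital normed algebra, isometrically and densely embedded via `ι` in a unital
Banach algebra `Ā`, and let `L` be a Leibniz seminorm on `A`.  Let `K̄` be the closure in `Ā`
of the image of `{a : L(a) ≤ 1}`, and let `L̄` be the Minkowski functional
`L̄(c) = inf {r > 0 : c ∈ r K̄}` (with `inf ∅ = ∞`).  Then `L̄` is Leibniz on `Ā`. -/
theorem closure_of_leibniz_is_leibniz {A : Type*} [NormedRing A] [NormOneClass A]
    [NormedAlgebra ℂ A]
    {Abar : Type*} [NormedRing Abar] [NormOneClass Abar] [NormedAlgebra ℂ Abar]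
    [CompleteSpace Abar]
    (ι : A →ₐ[ℂ] Abar) (hisometric : ∀ a : A, ‖ι a‖ = ‖a‖) (hdense : DenseRange ι)
    (L : A → ℝ≥0∞) (hsem : IsESeminorm L) (hleib : IsLeibniz L)
    (Kbar : Set Abar) (hK : Kbar = closure (ι '' {a : A | L a ≤ 1}))
    (Lbar : Abar → ℝ≥0∞)
    (hLbar : ∀ c : Abar, Lbar c = sInf {r : ℝ≥0∞ | ∃ s : ℝ, 0 < s ∧ r = ENNReal.ofReal s ∧
        ∃ k ∈ Kbar, c = (s : ℂ) • k}) :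
    ∀ c d : Abar, Lbar (c * d) ≤ Lbar c * (‖d‖₊ : ℝ≥0∞) + (‖c‖₊ : ℝ≥0∞) * Lbar d :=
  closure_of_leibniz_is_leibniz_general ι hisometric L hsem hleib Kbar hK Lbar hLbar
end

section
/- Let A be a unital normed algebra with completion Ā, and let L be a lower semicontinuous strongly Leibniz seminorm on A. Let L̄ be the closure of L on Ā (the Minkowski functional of the closure in Ā of {a ∈ A : L(a) ≤ 1}), which extends L. Assume that A^f = {a ∈ A : L(a) < ∞} is dense in Ā and spectrally stable in Ā, i.e. every element of A^f that is invertible in Ā is invertible in A^f. Then L̄ is strongly Leibniz on Ā: L̄(1) = 0, L̄(cd) ≤ L̄(c)‖d‖ + ‖c‖L̄(d) for all c, d ∈ Ā, and L̄(c⁻¹) ≤ ‖c⁻¹‖²·L̄(c) for every invertible c ∈ Ā. -/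
open scoped ENNReal

/-!
`L̄ = closureSeminorm ι L` satisfies `L̄ c ≤ y` exactly when `c` lies in the closure of
`ι '' {a | L a ≤ r}` for every `r > y`. Consequently `L̄ c ≤ G` whenever `ι aₙ → c` with
`L aₙ ≤ gₙ → G`, and by density every `c` is such a limit with `G = L̄ c`. The Leibniz and inverse
inequalities of `L` on approximants therefore pass to the limit. For the inverse of a unit `u`, its
approximants are eventually units of `Ā` (the units are open), hence units of `A` by spectral
stability, and their inverses converge to `u⁻¹` because inversion is continuous on the units of a
Banach algebra.
-/

section

open scoped Pointwise
open Filter Topology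

variable {A Abar : Type*} [NormedRing A] [NormedAlgebra ℂ A] [NormedRing Abar]
  [NormedAlgebra ℂ Abar]

theorem IsESeminorm.smul_sublevel {L : A → ℝ≥0∞} (hL : IsESeminorm L) {t : ℂ} (ht : t ≠ 0)
    (r : ℝ≥0∞) : t • {a | L a ≤ r} = {a | L a ≤ ‖t‖₊ * r} := by
  ext a
  have hnorm : (‖t‖₊ : ℝ≥0∞) ≠ 0 := by simpa using ht
  rw [Set.mem_smul_set_iff_inv_smul_mem₀ ht, Set.mem_ofPred_eq, Set.mem_ofPred_eq,
    hL.2.1 _ (inv_ne_zero ht), nnnorm_inv, ENNReal.coe_inv (by simpa using ht),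
    ENNReal.inv_mul_le_iff hnorm ENNReal.coe_ne_top]

theorem IsESeminorm.real_smul_closure_image_sublevel {L : A → ℝ≥0∞} (hL : IsESeminorm L)
    (ι : A →ₐ[ℂ] Abar) {s : ℝ} (hs : 0 < s) :
    (s : ℂ) • closure (ι '' {a | L a ≤ 1}) = closure (ι '' {a | L a ≤ ENNReal.ofReal s}) := by
  have hs' : (s : ℂ) ≠ 0 := by exact_mod_cast hs.ne'
  rw [← closure_smul₀, ← image_smul_set, hL.smul_sublevel hs', mul_one]
  congr
  rw [← enorm_eq_nnnorm, ← ofReal_norm, Complex.norm_real, Real.norm_of_nonneg hs.le]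

noncomputable def closureSeminorm (ι : A →ₐ[ℂ] Abar) (L : A → ℝ≥0∞) (c : Abar) : ℝ≥0∞ :=
  sInf {r : ℝ≥0∞ | ∃ s : ℝ, 0 < s ∧ r = ENNReal.ofReal s ∧
    ∃ k ∈ closure (ι '' {a : A | L a ≤ 1}), c = (s : ℂ) • k}

theorem closureSeminorm_le_iff {L : A → ℝ≥0∞} (hL : IsESeminorm L) (ι : A →ₐ[ℂ] Abar)
    {c : Abar} {y : ℝ≥0∞} :
    closureSeminorm ι L c ≤ y ↔ ∀ r, y < r → c ∈ closure (ι '' {a | L a ≤ r}) := by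
  have hmem : ∀ s : ℝ, 0 < s → ((∃ k ∈ closure (ι '' {a : A | L a ≤ 1}), c = (s : ℂ) • k) ↔
      c ∈ closure (ι '' {a | L a ≤ ENNReal.ofReal s})) := fun s hs => by
    rw [← hL.real_smul_closure_image_sublevel ι hs, Set.mem_smul_set]
    simp only [eq_comm]
  constructor
  · intro h r hr
    obtain ⟨_, ⟨s, hs, rfl, hc⟩, hsr⟩ := sInf_lt_iff.mp (h.trans_lt hr)
    exact closure_mono (Set.image_mono fun a ha => le_trans ha hsr.le) ((hmem s hs).mp hc)
  · intro h
    refine le_of_forall_gt_imp_ge_of_dense fun r hr => ?_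
    rcases eq_or_ne r ⊤ with rfl | hr_top
    · exact le_top
    have hr_pos : 0 < r.toReal := ENNReal.toReal_pos (pos_of_gt hr).ne' hr_top
    refine sInf_le ⟨r.toReal, hr_pos, (ENNReal.ofReal_toReal hr_top).symm, (hmem _ hr_pos).mpr ?_⟩
    rw [ENNReal.ofReal_toReal hr_top]
    exact h r hr

variable {L : A → ℝ≥0∞} {ι : A →ₐ[ℂ] Abar}

theorem closureSeminorm_le_of_tendsto (hL : IsESeminorm L) {α : Type*} {l : Filter α} [l.NeBot]
    {f : α → A} {g : α → ℝ≥0∞} {c : Abar} {G : ℝ≥0∞}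
    (hf : Tendsto (fun n => ι (f n)) l (𝓝 c)) (hg : Tendsto g l (𝓝 G))
    (hfg : ∀ᶠ n in l, L (f n) ≤ g n) : closureSeminorm ι L c ≤ G := by
  refine (closureSeminorm_le_iff hL ι).mpr fun r hr => mem_closure_of_tendsto hf ?_
  filter_upwards [hfg, hg.eventually_lt_const hr] with n hfn hgn
  exact Set.mem_image_of_mem ι (hfn.trans hgn.le)

theorem closureSeminorm_map_le (hL : IsESeminorm L) (a : A) : closureSeminorm ι L (ι a) ≤ L a :=
  (closureSeminorm_le_iff hL ι).mpr fun _ hr => subset_closure ⟨a, hr.le, rfl⟩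

theorem exists_tendsto_closureSeminorm (hL : IsESeminorm L) (hι : DenseRange ι) (c : Abar) :
    ∃ (a : ℕ → A) (x : ℕ → ℝ≥0∞), Tendsto (fun n => ι (a n)) atTop (𝓝 c) ∧
      Tendsto x atTop (𝓝 (closureSeminorm ι L c)) ∧ ∀ n, L (a n) ≤ x n := by
  set x : ℕ → ℝ≥0∞ := fun n => closureSeminorm ι L c + (n : ℝ≥0∞)⁻¹
  have hx : Tendsto x atTop (𝓝 (closureSeminorm ι L c)) := by
    simpa using tendsto_const_nhds.add ENNReal.tendsto_inv_nat_nhds_zero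
  have hmem : ∀ n, c ∈ closure (ι '' {a | L a ≤ x n}) := fun n => by
    rcases eq_or_ne (closureSeminorm ι L c) ⊤ with htop | hfin
    · simp [x, htop, hι.closure_range]
    · exact (closureSeminorm_le_iff hL ι).mp le_rfl _
        (ENNReal.lt_add_right hfin (by simp))
  have hball : ∀ n : ℕ, ∃ a, L a ≤ x n ∧ dist (ι a) c < 1 / (n + 1) := fun n => by
    obtain ⟨_, ⟨a, ha, rfl⟩, hdist⟩ :=
      Metric.mem_closure_iff.mp (hmem n) (1 / (n + 1)) Nat.one_div_pos_of_nat
    exact ⟨a, ha, by rwa [dist_comm] at hdist⟩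
  choose a haL hadist using hball
  refine ⟨a, x, ?_, hx, haL⟩
  exact tendsto_iff_dist_tendsto_zero.mpr (squeeze_zero (fun _ => dist_nonneg)
    (fun n => (hadist n).le) tendsto_one_div_add_atTop_nhds_zero_nat)

theorem closureSeminorm_zero (hL : IsESeminorm L) : closureSeminorm ι L 0 = 0 := by
  simpa [hL.1] using closureSeminorm_map_le hL (ι := ι) 0

theorem closureSeminorm_one (hL : IsESeminorm L) (h1 : L 1 = 0) : closureSeminorm ι L 1 = 0 := by
  simpa [h1] using closureSeminorm_map_le hL (ι := ι) 1

theorem coe_nnnorm_eq_enorm_of_norm_eq {E F : Type*} [SeminormedAddGroup E]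
    [SeminormedAddGroup F] {x : E} {y : F} (h : ‖y‖ = ‖x‖) : (‖x‖₊ : ℝ≥0∞) = ‖y‖ₑ := by
  rw [← enorm_eq_nnnorm, ← ofReal_norm, ← ofReal_norm, h]

theorem closureSeminorm_mul_le (hL : IsESeminorm L) (hLeib : IsLeibniz L) (hι : DenseRange ι)
    (hiso : ∀ a, ‖ι a‖ = ‖a‖) (c d : Abar) :
    closureSeminorm ι L (c * d) ≤
      closureSeminorm ι L c * ‖d‖₊ + ‖c‖₊ * closureSeminorm ι L d := by
  rcases eq_or_ne d 0 with rfl | hd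
  · simp [closureSeminorm_zero hL]
  rcases eq_or_ne c 0 with rfl | hc
  · simp [closureSeminorm_zero hL]
  obtain ⟨a, x, ha, hx, hax⟩ := exists_tendsto_closureSeminorm hL hι c
  obtain ⟨b, y, hb, hy, hby⟩ := exists_tendsto_closureSeminorm hL hι d
  refine closureSeminorm_le_of_tendsto hL (l := atTop) (f := fun n => a n * b n)
    (g := fun n => x n * ‖ι (b n)‖ₑ + ‖ι (a n)‖ₑ * y n) ?_ ?_ (Eventually.of_forall fun n => ?_)
  · simpa using ha.mul hb
  · simpa [enorm_eq_nnnorm] using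
      (ENNReal.Tendsto.mul hx (.inr enorm_ne_top) hb.enorm (.inl (enorm_ne_zero.2 hd))).add
        (ENNReal.Tendsto.mul ha.enorm (.inl (enorm_ne_zero.2 hc)) hy (.inr enorm_ne_top))
  · calc L (a n * b n) ≤ L (a n) * ‖b n‖₊ + ‖a n‖₊ * L (b n) := hLeib _ _
      _ ≤ x n * ‖ι (b n)‖ₑ + ‖ι (a n)‖ₑ * y n := by
        rw [coe_nnnorm_eq_enorm_of_norm_eq (hiso (a n)),
          coe_nnnorm_eq_enorm_of_norm_eq (hiso (b n))]
        gcongr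
        exacts [hax n, hby n]

theorem map_ringInverse_of_isUnit {M N F : Type*} [MonoidWithZero M] [MonoidWithZero N]
    [FunLike F M N] [MonoidHomClass F M N] (f : F) {a : M} (ha : IsUnit a) :
    f (Ring.inverse a) = Ring.inverse (f a) := by
  obtain ⟨v, rfl⟩ := ha
  calc f (Ring.inverse v) = f ↑v⁻¹ := by rw [Ring.inverse_unit]
    _ = ↑(Units.map (f : M →* N) v)⁻¹ := (Units.coe_map_inv (f : M →* N) v).symm
    _ = Ring.inverse (f v) := (Ring.inverse_unit _).symm

theorem closureSeminorm_inverse_le [CompleteSpace Abar] (hL : IsESeminorm L)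
    (hSL : IsStronglyLeibniz L) (hι : DenseRange ι) (hiso : ∀ a, ‖ι a‖ = ‖a‖)
    (hstable : ∀ a, L a < ⊤ → IsUnit (ι a) → IsUnit a) (u : Abarˣ) :
    closureSeminorm ι L ↑u⁻¹ ≤ ‖(↑u⁻¹ : Abar)‖₊ ^ 2 * closureSeminorm ι L u := by
  cases subsingleton_or_nontrivial Abar
  · simp [Subsingleton.elim (↑u⁻¹ : Abar) 0, closureSeminorm_zero hL]
  rcases eq_or_ne (closureSeminorm ι L u) ⊤ with htop | hfin
  · rw [htop, ENNReal.mul_top (by simp [u⁻¹.ne_zero])]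
    exact le_top
  obtain ⟨a, x, ha, hx, hax⟩ := exists_tendsto_closureSeminorm hL hι u
  have hunit : ∀ᶠ n in atTop, IsUnit (a n) := by
    filter_upwards [ha (Units.isOpen.mem_nhds u.isUnit), hx.eventually_lt_const hfin.lt_top]
      with n hn hxn
    exact hstable _ ((hax n).trans_lt hxn) hn
  have hinv : Tendsto (fun n => ι (Ring.inverse (a n))) atTop (𝓝 ↑u⁻¹) := by
    refine Tendsto.congr' (hunit.mono fun n hn => (map_ringInverse_of_isUnit ι hn).symm) ?_
    rw [← Ring.inverse_unit u]
    exact (NormedRing.inverse_continuousAt u).tendsto.comp ha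
  refine closureSeminorm_le_of_tendsto hL hinv (g := fun n => ‖ι (Ring.inverse (a n))‖ₑ ^ 2 * x n)
    ?_ ?_
  · simpa [enorm_eq_nnnorm] using
      ENNReal.Tendsto.mul (ENNReal.Tendsto.pow hinv.enorm) (.inr hfin) hx (.inr (by simp))
  · filter_upwards [hunit] with n ⟨v, hv⟩
    calc L (Ring.inverse (a n)) ≤ ‖Ring.inverse (a n)‖₊ ^ 2 * L (a n) := by
          simpa [← hv, Ring.inverse_unit] using hSL.2.2 v
      _ ≤ ‖ι (Ring.inverse (a n))‖ₑ ^ 2 * x n := by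
        rw [coe_nnnorm_eq_enorm_of_norm_eq (hiso _)]
        gcongr
        exact hax n

end

theorem closure_of_stronglyLeibniz_is_stronglyLeibniz_general {A : Type*} [NormedRing A]
    [NormedAlgebra ℂ A]
    {Abar : Type*} [NormedRing Abar] [NormedAlgebra ℂ Abar]
    [CompleteSpace Abar]
    (ι : A →ₐ[ℂ] Abar) (hisometric : ∀ a : A, ‖ι a‖ = ‖a‖) (hdense : DenseRange ι)
    (L : A → ℝ≥0∞) (hsem : IsESeminorm L) (hsl : IsStronglyLeibniz L)
    (hstable : ∀ a : A, L a < ⊤ → IsUnit (ι a) →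
      ∃ b : A, L b < ⊤ ∧ a * b = 1 ∧ b * a = 1)
    (Kbar : Set Abar) (hK : Kbar = closure (ι '' {a : A | L a ≤ 1}))
    (Lbar : Abar → ℝ≥0∞)
    (hLbar : ∀ c : Abar, Lbar c = sInf {r : ℝ≥0∞ | ∃ s : ℝ, 0 < s ∧ r = ENNReal.ofReal s ∧
        ∃ k ∈ Kbar, c = (s : ℂ) • k}) :
    Lbar 1 = 0 ∧
    (∀ c d : Abar, Lbar (c * d) ≤ Lbar c * (‖d‖₊ : ℝ≥0∞) + (‖c‖₊ : ℝ≥0∞) * Lbar d) ∧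
    (∀ u : Abarˣ, Lbar ((u⁻¹ : Abarˣ) : Abar) ≤
      ((‖((u⁻¹ : Abarˣ) : Abar)‖₊ : ℝ≥0∞)) ^ 2 * Lbar (u : Abar)) := by
  obtain rfl : Lbar = closureSeminorm ι L := funext fun c => by rw [hLbar, hK, closureSeminorm]
  have hunit : ∀ a, L a < ⊤ → IsUnit (ι a) → IsUnit a := fun a ha hu =>
    let ⟨b, _, hab, hba⟩ := hstable a ha hu
    ⟨⟨a, b, hab, hba⟩, rfl⟩
  exact ⟨closureSeminorm_one hsem hsl.2.1, closureSeminorm_mul_le hsem hsl.1 hdense hisometric,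
    closureSeminorm_inverse_le hsem hsl hdense hisometric hunit⟩

/-- Let `A` be a unital normed algebra, isometrically and densely embedded via `ι` in a unital
Banach algebra `Ā`, and let `L` be a lower semicontinuous strongly Leibniz seminorm on `A`.
Assume `A^f = {a : L(a) < ∞}` has dense image in `Ā` and is spectrally stable in `Ā`
(its elements invertible in `Ā` are invertible in `A^f`).  Then the closure `L̄` of `L`
(the Minkowski functional of the closure of `{a : L(a) ≤ 1}`) is strongly Leibniz on `Ā`. -/
theorem closure_of_stronglyLeibniz_is_stronglyLeibniz {A : Type*} [NormedRing A]
    [NormOneClass A] [NormedAlgebra ℂ A]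
    {Abar : Type*} [NormedRing Abar] [NormOneClass Abar] [NormedAlgebra ℂ Abar]
    [CompleteSpace Abar]
    (ι : A →ₐ[ℂ] Abar) (hisometric : ∀ a : A, ‖ι a‖ = ‖a‖) (hdense : DenseRange ι)
    (L : A → ℝ≥0∞) (hsem : IsESeminorm L) (hsl : IsStronglyLeibniz L)
    (hlsc : IsClosed {a : A | L a ≤ 1})
    (hfdense : Dense (ι '' {a : A | L a < ⊤}))
    (hstable : ∀ a : A, L a < ⊤ → IsUnit (ι a) →
      ∃ b : A, L b < ⊤ ∧ a * b = 1 ∧ b * a = 1)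
    (Kbar : Set Abar) (hK : Kbar = closure (ι '' {a : A | L a ≤ 1}))
    (Lbar : Abar → ℝ≥0∞)
    (hLbar : ∀ c : Abar, Lbar c = sInf {r : ℝ≥0∞ | ∃ s : ℝ, 0 < s ∧ r = ENNReal.ofReal s ∧
        ∃ k ∈ Kbar, c = (s : ℂ) • k}) :
    Lbar 1 = 0 ∧
    (∀ c d : Abar, Lbar (c * d) ≤ Lbar c * (‖d‖₊ : ℝ≥0∞) + (‖c‖₊ : ℝ≥0∞) * Lbar d) ∧
    (∀ u : Abarˣ, Lbar ((u⁻¹ : Abarˣ) : Abar) ≤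
      ((‖((u⁻¹ : Abarˣ) : Abar)‖₊ : ℝ≥0∞)) ^ 2 * Lbar (u : Abar)) :=
  closure_of_stronglyLeibniz_is_stronglyLeibniz_general ι hisometric hdense L hsem hsl hstable Kbar
    hK Lbar hLbar
end

section
/- Let C and A be unital normed algebras, let π : C → A be a surjective unital algebra homomorphism that is norm non-increasing, and let L be a Leibniz seminorm on C. Let L̃ denote the quotient seminorm on A, L̃(a) = inf{L(c) : c ∈ C, π(c) = a}. If L is π-compatible, then: (i) the norm on A coincides with the quotient norm, i.e. ‖a‖ = inf{‖c‖ : c ∈ C, π(c) = a} for every a ∈ A; and (ii) L̃ is Leibniz: L̃(ab) ≤ L̃(a)‖b‖ + ‖a‖L̃(b) for all a, b ∈ A. -/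
/-!
The quotient norm is at least `‖a‖` because `π` is contractive, and at most `‖a‖` because
compatibility provides lifts of norm `‖a‖ + ε`. For the Leibniz inequality, lift `a` and `b`
to `c` and `d` that are `ε`-optimal for both `L` and the norm at once; then `π (c * d) = a * b`
and the Leibniz inequality for `c, d` bounds `L̃ (a * b)` by
`(L̃ a + ε) (‖b‖ + ε) + (‖a‖ + ε) (L̃ b + ε)`, and `ε → 0` gives the claim. Simultaneous
optimality is exactly what compatibility adds to the definition of `L̃`.
-/

open scoped ENNReal
open Filter Topology

section Quotient

variable {C A : Type*}

noncomputable def quotientSeminorm (π : C → A) (L : C → ℝ≥0∞) (a : A) : ℝ≥0∞ :=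
  sInf {r : ℝ≥0∞ | ∃ c : C, π c = a ∧ r = L c}

theorem quotientSeminorm_apply_le (π : C → A) (L : C → ℝ≥0∞) (c : C) :
    quotientSeminorm π L (π c) ≤ L c :=
  sInf_le ⟨c, rfl, rfl⟩

variable [SeminormedAddGroup C] [SeminormedAddGroup A]

def IsCompatible (π : C → A) (L : C → ℝ≥0∞) : Prop :=
  ∀ a : A, ∀ ε : ℝ, 0 < ε → ∃ c : C, π c = a ∧
    L c ≤ quotientSeminorm π L a + ENNReal.ofReal ε ∧ ‖c‖ ≤ ‖a‖ + ε

theorem norm_eq_sInf_norm_preimage {π : C → A} (hcontr : ∀ c, ‖π c‖ ≤ ‖c‖) {a : A}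
    (hlift : ∀ ε : ℝ, 0 < ε → ∃ c, π c = a ∧ ‖c‖ ≤ ‖a‖ + ε) :
    ‖a‖ = sInf {r : ℝ | ∃ c : C, π c = a ∧ r = ‖c‖} := by
  have hbdd : BddBelow {r : ℝ | ∃ c : C, π c = a ∧ r = ‖c‖} :=
    ⟨0, fun _ ⟨c, _, hr⟩ => hr ▸ norm_nonneg c⟩
  refine le_antisymm ?_ (le_of_forall_pos_le_add fun ε hε => ?_)
  · obtain ⟨c₀, hc₀, -⟩ := hlift 1 one_pos
    refine le_csInf ⟨‖c₀‖, c₀, hc₀, rfl⟩ ?_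
    rintro _ ⟨c, rfl, rfl⟩
    exact hcontr c
  · obtain ⟨c, hc, hnorm⟩ := hlift ε hε
    exact (csInf_le hbdd ⟨c, hc, rfl⟩).trans hnorm

end Quotient

theorem ENNReal.coe_nnnorm_le_add_ofReal {E F : Type*} [SeminormedAddGroup E]
    [SeminormedAddGroup F] {x : E} {y : F} {ε : ℝ} (hε : 0 ≤ ε) (h : ‖x‖ ≤ ‖y‖ + ε) :
    (‖x‖₊ : ℝ≥0∞) ≤ ‖y‖₊ + ENNReal.ofReal ε := by
  rw [← enorm_eq_nnnorm, ← enorm_eq_nnnorm, ← ofReal_norm, ← ofReal_norm,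
    ← ENNReal.ofReal_add (norm_nonneg y) hε]
  exact ENNReal.ofReal_le_ofReal h

theorem ENNReal.tendsto_add_ofReal_nhdsGT (x : ℝ≥0∞) :
    Tendsto (fun ε : ℝ => x + ENNReal.ofReal ε) (𝓝[>] 0) (𝓝 x) := by
  have h : Tendsto ENNReal.ofReal (𝓝[>] 0) (𝓝 0) := by
    simpa using (ENNReal.continuous_ofReal.tendsto 0).mono_left nhdsWithin_le_nhds
  simpa using tendsto_const_nhds.add h

theorem ENNReal.le_mul_add_mul_of_forall_pos {x p q r s : ℝ≥0∞} (hp : p ≠ ∞) (hq : q ≠ ∞)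
    (hr : r ≠ ∞) (hs : s ≠ ∞)
    (h : ∀ ε : ℝ, 0 < ε → x ≤ (p + ENNReal.ofReal ε) * (q + ENNReal.ofReal ε) +
      (r + ENNReal.ofReal ε) * (s + ENNReal.ofReal ε)) :
    x ≤ p * q + r * s :=
  ge_of_tendsto
    ((ENNReal.Tendsto.mul (tendsto_add_ofReal_nhdsGT p) (.inr hq) (tendsto_add_ofReal_nhdsGT q)
        (.inr hp)).add
      (ENNReal.Tendsto.mul (tendsto_add_ofReal_nhdsGT r) (.inr hs) (tendsto_add_ofReal_nhdsGT s)
        (.inr hr)))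
    (eventually_nhdsWithin_of_forall h)

section Leibniz

variable {C A F : Type*} [NormedRing C] [NormedAlgebra ℂ C] [NormedRing A]
  [FunLike F C A] [RingHomClass F C A] {L : C → ℝ≥0∞}

theorem IsLeibniz.map_zero (hleib : IsLeibniz L) : L 0 = 0 := by
  simpa using hleib 0 0

theorem IsLeibniz.quotientSeminorm_zero (hleib : IsLeibniz L) (π : F) :
    quotientSeminorm π L 0 = 0 := by
  simpa [hleib.map_zero] using quotientSeminorm_apply_le π L 0

theorem IsLeibniz.quotientSeminorm_map_mul_le (hleib : IsLeibniz L) (π : F) (c d : C) :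
    quotientSeminorm π L (π c * π d) ≤ L c * ‖d‖₊ + ‖c‖₊ * L d := by
  simpa only [map_mul] using (quotientSeminorm_apply_le π L (c * d)).trans (hleib c d)

theorem isLeibniz_quotientSeminorm [NormedAlgebra ℂ A] (hleib : IsLeibniz L) {π : F}
    (hcompat : IsCompatible π L) : IsLeibniz (quotientSeminorm π L) := by
  intro a b
  -- Infinite values come first: the limit `ε → 0` below breaks down at `∞ * 0`.
  rcases eq_or_ne (quotientSeminorm π L a) ⊤ with ha | ha
  · rcases eq_or_ne b 0 with rfl | hb
    · simp [hleib.quotientSeminorm_zero]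
    · simp [ha, hb]
  rcases eq_or_ne (quotientSeminorm π L b) ⊤ with hb | hb
  · rcases eq_or_ne a 0 with rfl | ha₀
    · simp [hleib.quotientSeminorm_zero]
    · simp [hb, ha₀]
  refine ENNReal.le_mul_add_mul_of_forall_pos ha ENNReal.coe_ne_top ENNReal.coe_ne_top hb
    fun ε hε => ?_
  obtain ⟨c, rfl, hLc, hc⟩ := hcompat a ε hε
  obtain ⟨d, rfl, hLd, hd⟩ := hcompat b ε hε
  calc quotientSeminorm π L (π c * π d) ≤ L c * ‖d‖₊ + ‖c‖₊ * L d :=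
        hleib.quotientSeminorm_map_mul_le π c d
    _ ≤ _ := by
        gcongr
        · exact ENNReal.coe_nnnorm_le_add_ofReal hε.le hd
        · exact ENNReal.coe_nnnorm_le_add_ofReal hε.le hc

end Leibniz

theorem quotient_of_compatible_leibniz_general {C A : Type*}
    [NormedRing C] [NormedAlgebra ℂ C]
    [NormedRing A] [NormedAlgebra ℂ A]
    (π : C →ₐ[ℂ] A) (hcontr : ∀ c : C, ‖π c‖ ≤ ‖c‖)
    (L : C → ℝ≥0∞) (hleib : IsLeibniz L)
    (Lt : A → ℝ≥0∞) (hLt : ∀ a : A, Lt a = sInf {r : ℝ≥0∞ | ∃ c : C, π c = a ∧ r = L c})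
    (hcompat : ∀ a : A, ∀ ε : ℝ, 0 < ε → ∃ c : C, π c = a ∧
      L c ≤ Lt a + ENNReal.ofReal ε ∧ ‖c‖ ≤ ‖a‖ + ε) :
    (∀ a : A, ‖a‖ = sInf {r : ℝ | ∃ c : C, π c = a ∧ r = ‖c‖}) ∧
    (∀ a b : A, Lt (a * b) ≤ Lt a * (‖b‖₊ : ℝ≥0∞) + (‖a‖₊ : ℝ≥0∞) * Lt b) := by
  obtain rfl : Lt = quotientSeminorm π L := funext hLt
  refine ⟨fun a => norm_eq_sInf_norm_preimage hcontr fun ε hε => ?_,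
    isLeibniz_quotientSeminorm hleib hcompat⟩
  obtain ⟨c, hc, -, hnorm⟩ := hcompat a ε hε
  exact ⟨c, hc, hnorm⟩

/-- Let `π : C → A` be a surjective norm non-increasing unital homomorphism of unital normed
algebras, let `L` be a Leibniz seminorm on `C`, and let `L̃` be the quotient seminorm on `A`.
If `L` is `π`-compatible, then the norm on `A` is the quotient norm from `C`, and `L̃` is
Leibniz. -/
theorem quotient_of_compatible_leibniz {C A : Type*}
    [NormedRing C] [NormOneClass C] [NormedAlgebra ℂ C]
    [NormedRing A] [NormOneClass A] [NormedAlgebra ℂ A]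
    (π : C →ₐ[ℂ] A) (hsurj : Function.Surjective π) (hcontr : ∀ c : C, ‖π c‖ ≤ ‖c‖)
    (L : C → ℝ≥0∞) (hsem : IsESeminorm L) (hleib : IsLeibniz L)
    (Lt : A → ℝ≥0∞) (hLt : ∀ a : A, Lt a = sInf {r : ℝ≥0∞ | ∃ c : C, π c = a ∧ r = L c})
    (hcompat : ∀ a : A, ∀ ε : ℝ, 0 < ε → ∃ c : C, π c = a ∧
      L c ≤ Lt a + ENNReal.ofReal ε ∧ ‖c‖ ≤ ‖a‖ + ε) :
    (∀ a : A, ‖a‖ = sInf {r : ℝ | ∃ c : C, π c = a ∧ r = ‖c‖}) ∧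
    (∀ a b : A, Lt (a * b) ≤ Lt a * (‖b‖₊ : ℝ≥0∞) + (‖a‖₊ : ℝ≥0∞) * Lt b) :=
  quotient_of_compatible_leibniz_general π hcontr L hleib Lt hLt hcompat
end

section
/- Let A and B be unital normed algebras, let Ω be a normed A-B-bimodule, and let ω₀ ∈ Ω. Define N on the algebra A ⊕ B (with coordinatewise operations, unit (1_A, 1_B), and norm ‖(a,b)‖ = max(‖a‖, ‖b‖)) by N(a,b) = ‖a·ω₀ − ω₀·b‖. Then: (i) N satisfies the cross-Leibniz inequality N(aa', bb') ≤ N(a,b)·‖b'‖ + ‖a‖·N(a',b') for all a, a' ∈ A and b, b' ∈ B; (ii) N is a continuous strongly Leibniz seminorm on A ⊕ B: N(1_A, 1_B) = 0, N((a,b)(a',b')) ≤ N(a,b)‖(a',b')‖ + ‖(a,b)‖N(a',b'), and N(a⁻¹, b⁻¹) ≤ ‖(a⁻¹, b⁻¹)‖²·N(a,b) whenever a is invertible in A and b is invertible in B. -/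
/-!
Write `δ p = p.1 • ω₀ - op p.2 • ω₀`, so that `N = ‖δ ·‖`. The map `δ` is linear, hence `N` is a
seminorm, and it is a derivation into a bimodule: `δ (p * q) = p.1 • δ q + op q.2 • δ p`. Taking
norms gives the cross-Leibniz inequality, and applying `u⁻¹ • op v⁻¹ • ·` to `δ (u, v)` gives
`-δ (u⁻¹, v⁻¹)`, which is the strong Leibniz bound. Homogeneity over `ℂ` holds because the
`ℂ`-action on `Ω` factors through `algebraMap ℂ A`, which preserves norms.
-/

open MulOpposite

abbrev NormedSpace.ofIsScalarTower (𝕜 A Ω : Type*) [NormedField 𝕜] [SeminormedRing A]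
    [NormOneClass A] [NormedAlgebra 𝕜 A] [SeminormedAddCommGroup Ω] [Module 𝕜 Ω] [Module A Ω]
    [IsScalarTower 𝕜 A Ω] [IsBoundedSMul A Ω] : NormedSpace 𝕜 Ω where
  norm_smul_le t ω := by
    simpa only [algebraMap_smul, norm_algebraMap'] using norm_smul_le (algebraMap 𝕜 A t) ω

section Bimodule

variable {A B Ω : Type*} [SeminormedRing A] [SeminormedRing B] [SeminormedAddCommGroup Ω]
  [Module A Ω] [Module Bᵐᵒᵖ Ω]

theorem isBoundedSMul_of_norm_smul_op_smul_le [NormOneClass B]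
    (h : ∀ (a : A) (ω : Ω) (b : B), ‖a • op b • ω‖ ≤ ‖a‖ * ‖ω‖ * ‖b‖) :
    IsBoundedSMul A Ω :=
  .of_norm_smul_le fun a ω => by simpa using h a ω 1

theorem isBoundedSMul_op_of_norm_smul_op_smul_le [NormOneClass A]
    (h : ∀ (a : A) (ω : Ω) (b : B), ‖a • op b • ω‖ ≤ ‖a‖ * ‖ω‖ * ‖b‖) :
    IsBoundedSMul Bᵐᵒᵖ Ω :=
  .of_norm_smul_le fun b ω =>
    calc ‖b • ω‖ = ‖(1 : A) • op b.unop • ω‖ := by rw [one_smul, op_unop]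
      _ ≤ ‖(1 : A)‖ * ‖ω‖ * ‖b.unop‖ := h 1 ω b.unop
      _ = ‖b‖ * ‖ω‖ := by rw [norm_one, one_mul, mul_comm, ← norm_op, op_unop]

theorem norm_smul_op_smul_le [IsBoundedSMul A Ω] [IsBoundedSMul Bᵐᵒᵖ Ω] (a : A) (ω : Ω) (b : B) :
    ‖a • op b • ω‖ ≤ ‖a‖ * ‖ω‖ * ‖b‖ :=
  calc ‖a • op b • ω‖ ≤ ‖a‖ * (‖op b‖ * ‖ω‖) :=
        (norm_smul_le _ _).trans (by gcongr; exact norm_smul_le _ _)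
    _ = ‖a‖ * ‖ω‖ * ‖b‖ := by rw [norm_op]; ring

end Bimodule

section Bridge

variable {A B Ω : Type*}

section Algebraic

variable [Ring A] [Ring B] [AddCommGroup Ω] [Module A Ω] [Module Bᵐᵒᵖ Ω]

def bimoduleBridge (ω₀ : Ω) (p : A × B) : Ω := p.1 • ω₀ - op p.2 • ω₀

variable (ω₀ : Ω)

theorem bimoduleBridge_mul [SMulCommClass A Bᵐᵒᵖ Ω] (p q : A × B) :
    bimoduleBridge ω₀ (p * q) = p.1 • bimoduleBridge ω₀ q + op q.2 • bimoduleBridge ω₀ p := by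
  simp only [bimoduleBridge, Prod.fst_mul, Prod.snd_mul, op_mul, mul_smul, smul_sub,
    smul_comm p.1 (op q.2)]
  abel

theorem bimoduleBridge_units_inv [SMulCommClass A Bᵐᵒᵖ Ω] (u : Aˣ) (v : Bˣ) :
    bimoduleBridge ω₀ ((↑u⁻¹ : A), (↑v⁻¹ : B)) =
      -((↑u⁻¹ : A) • op (↑v⁻¹ : B) • bimoduleBridge ω₀ ((u : A), (v : B))) := by
  simp only [bimoduleBridge, smul_sub, smul_comm (↑u⁻¹ : A) (op (↑v⁻¹ : B)), smul_smul,
    ← op_mul, Units.inv_mul, Units.mul_inv, op_one, one_smul, neg_sub]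

end Algebraic

variable (𝕜 : Type*) [NormedField 𝕜] [SeminormedRing A] [NormedAlgebra 𝕜 A] [SeminormedRing B]
  [NormedAlgebra 𝕜 B] [SeminormedAddCommGroup Ω] [NormedSpace 𝕜 Ω] [Module A Ω] [Module Bᵐᵒᵖ Ω]
  [IsScalarTower 𝕜 A Ω] [IsScalarTower 𝕜 Bᵐᵒᵖ Ω]

def bimoduleBridgeₗ (ω₀ : Ω) : A × B →ₗ[𝕜] Ω where
  toFun := bimoduleBridge ω₀
  map_add' p q := by
    simp only [bimoduleBridge, Prod.fst_add, Prod.snd_add, op_add, add_smul]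
    abel
  map_smul' t p := by
    simp only [bimoduleBridge, Prod.smul_fst, Prod.smul_snd, op_smul, smul_assoc, smul_sub,
      RingHom.id_apply]

def bimoduleBridgeSeminorm (ω₀ : Ω) : Seminorm 𝕜 (A × B) :=
  (normSeminorm 𝕜 Ω).comp (bimoduleBridgeₗ 𝕜 ω₀)

variable {𝕜} (ω₀ : Ω)

@[simp]
theorem bimoduleBridgeSeminorm_apply (p : A × B) :
    bimoduleBridgeSeminorm 𝕜 ω₀ p = ‖bimoduleBridge ω₀ p‖ := rfl

theorem bimoduleBridgeSeminorm_one : bimoduleBridgeSeminorm 𝕜 ω₀ (1 : A × B) = 0 := by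
  simp [bimoduleBridge]

theorem continuous_bimoduleBridgeSeminorm [ContinuousSMul A Ω] [ContinuousSMul Bᵐᵒᵖ Ω] :
    Continuous (bimoduleBridgeSeminorm 𝕜 ω₀ : A × B → ℝ) := by
  show Continuous fun p : A × B => ‖p.1 • ω₀ - op p.2 • ω₀‖
  fun_prop

variable [IsBoundedSMul A Ω] [IsBoundedSMul Bᵐᵒᵖ Ω] [SMulCommClass A Bᵐᵒᵖ Ω]

theorem bimoduleBridgeSeminorm_mul_le_cross (p q : A × B) :
    bimoduleBridgeSeminorm 𝕜 ω₀ (p * q) ≤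
      bimoduleBridgeSeminorm 𝕜 ω₀ p * ‖q.2‖ + ‖p.1‖ * bimoduleBridgeSeminorm 𝕜 ω₀ q := by
  simp only [bimoduleBridgeSeminorm_apply, bimoduleBridge_mul]
  calc ‖p.1 • bimoduleBridge ω₀ q + op q.2 • bimoduleBridge ω₀ p‖
      ≤ ‖p.1‖ * ‖bimoduleBridge ω₀ q‖ + ‖op q.2‖ * ‖bimoduleBridge ω₀ p‖ :=
        norm_add_le_of_le (norm_smul_le _ _) (norm_smul_le _ _)
    _ = ‖bimoduleBridge ω₀ p‖ * ‖q.2‖ + ‖p.1‖ * ‖bimoduleBridge ω₀ q‖ := by rw [norm_op]; ring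

theorem bimoduleBridgeSeminorm_mul_le (p q : A × B) :
    bimoduleBridgeSeminorm 𝕜 ω₀ (p * q) ≤
      bimoduleBridgeSeminorm 𝕜 ω₀ p * ‖q‖ + ‖p‖ * bimoduleBridgeSeminorm 𝕜 ω₀ q :=
  (bimoduleBridgeSeminorm_mul_le_cross ω₀ p q).trans <| by
    gcongr
    exacts [norm_snd_le q, norm_fst_le p]

theorem bimoduleBridgeSeminorm_units_inv_le (u : Aˣ) (v : Bˣ) :
    bimoduleBridgeSeminorm 𝕜 ω₀ ((↑u⁻¹ : A), (↑v⁻¹ : B)) ≤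
      ‖((↑u⁻¹ : A), (↑v⁻¹ : B))‖ ^ 2 * bimoduleBridgeSeminorm 𝕜 ω₀ ((u : A), (v : B)) := by
  set p : A × B := ((↑u⁻¹ : A), (↑v⁻¹ : B))
  rw [bimoduleBridgeSeminorm_apply, bimoduleBridge_units_inv, norm_neg]
  calc ‖p.1 • op p.2 • bimoduleBridge ω₀ ((u : A), (v : B))‖
      ≤ ‖p.1‖ * bimoduleBridgeSeminorm 𝕜 ω₀ ((u : A), (v : B)) * ‖p.2‖ := norm_smul_op_smul_le _ _ _
    _ ≤ ‖p‖ * bimoduleBridgeSeminorm 𝕜 ω₀ ((u : A), (v : B)) * ‖p‖ := by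
        gcongr
        exacts [norm_fst_le p, norm_snd_le p]
    _ = ‖p‖ ^ 2 * bimoduleBridgeSeminorm 𝕜 ω₀ ((u : A), (v : B)) := by ring

end Bridge

/-- Let `A`, `B` be unital normed algebras, `Ω` a normed `A`-`B`-bimodule and `ω₀ ∈ Ω`.
The seminorm `N(a, b) = ‖a ω₀ − ω₀ b‖` on `A ⊕ B` (with the max norm) satisfies the
cross-Leibniz inequality and is a continuous strongly Leibniz seminorm. -/
theorem bimodule_bridge_stronglyLeibniz {A B : Type*}
    [NormedRing A] [NormOneClass A] [NormedAlgebra ℂ A]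
    [NormedRing B] [NormOneClass B] [NormedAlgebra ℂ B]
    {Ω : Type*} [NormedAddCommGroup Ω] [Module ℂ Ω]
    [Module A Ω] [Module Bᵐᵒᵖ Ω] [SMulCommClass A Bᵐᵒᵖ Ω]
    [IsScalarTower ℂ A Ω] [IsScalarTower ℂ Bᵐᵒᵖ Ω]
    (hnorm : ∀ (a : A) (ω : Ω) (b : B), ‖a • (op b • ω)‖ ≤ ‖a‖ * ‖ω‖ * ‖b‖)
    (ω₀ : Ω)
    (N : A × B → ℝ)
    (hN : ∀ p : A × B, N p = ‖p.1 • ω₀ - op p.2 • ω₀‖) :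
    (∀ (a a' : A) (b b' : B),
      N (a * a', b * b') ≤ N (a, b) * ‖b'‖ + ‖a‖ * N (a', b')) ∧
    N 1 = 0 ∧ N 0 = 0 ∧
    (∀ (t : ℂ) (p : A × B), N (t • p) = ‖t‖ * N p) ∧
    (∀ p q : A × B, N (p + q) ≤ N p + N q) ∧
    Continuous N ∧
    (∀ p q : A × B, N (p * q) ≤ N p * ‖q‖ + ‖p‖ * N q) ∧
    (∀ (u : Aˣ) (v : Bˣ), N (((u⁻¹ : Aˣ) : A), ((v⁻¹ : Bˣ) : B)) ≤
      ‖((((u⁻¹ : Aˣ) : A)), (((v⁻¹ : Bˣ) : B)))‖ ^ 2 * N ((u : A), (v : B))) := by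
  have := isBoundedSMul_of_norm_smul_op_smul_le hnorm
  have := isBoundedSMul_op_of_norm_smul_op_smul_le hnorm
  let := NormedSpace.ofIsScalarTower ℂ A Ω
  obtain rfl : N = bimoduleBridgeSeminorm ℂ ω₀ := funext hN
  exact ⟨fun a a' b b' => bimoduleBridgeSeminorm_mul_le_cross ω₀ (a, b) (a', b'),
    bimoduleBridgeSeminorm_one ω₀, map_zero _, map_smul_eq_mul _, map_add_le_add _,
    continuous_bimoduleBridgeSeminorm ω₀, bimoduleBridgeSeminorm_mul_le ω₀,
    bimoduleBridgeSeminorm_units_inv_le ω₀⟩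
end

section
/- Let A and B be unital C*-algebras, let L_A and L_B be seminorms (values in [0,∞]) on A and B respectively, let Ω be a normed A-B-bimodule with a distinguished element ω₀ ≠ 0, and set N(a,b) = ‖a·ω₀ − ω₀·b‖. Assume the bridge condition: for every self-adjoint a ∈ A and every ε > 0 there is a self-adjoint b ∈ B with max(L_B(b), N(a,b)) ≤ L_A(a) + ε, and symmetrically for every self-adjoint b ∈ B and ε > 0 there is a self-adjoint a ∈ A with max(L_A(a), N(a,b)) ≤ L_B(b) + ε. Define L on A ⊕ B by L(a,b) = max(L_A(a), L_B(b), N(a,b), N(a*, b*)). Then the quotients of L agree with L_A and L_B on self-adjoint elements: for every self-adjoint a ∈ A, inf{L(a,b) : b ∈ B} = L_A(a), and for every self-adjoint b ∈ B, inf{L(a,b) : a ∈ A} = L_B(b). -/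
/-!
`L` dominates `L_A` and `L_B`, so each quotient is at least the corresponding seminorm. For
self-adjoint `a` and `b` the two `N`-terms of `L (a, b)` coincide, so a self-adjoint partner
given by the bridge condition brings `L (a, b)` within `ε` of `L_A a` (resp. `L_B b`).
-/

open scoped ENNReal
open MulOpposite

theorem ENNReal.iInf_eq_of_forall_ge_of_forall_pos_exists_le_add {ι : Type*}
    {f : ι → ℝ≥0∞} {c : ℝ≥0∞} (hge : ∀ i, c ≤ f i)
    (hle : ∀ ε : ℝ, 0 < ε → ∃ i, f i ≤ c + ENNReal.ofReal ε) :
    ⨅ i, f i = c := by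
  refine le_antisymm (ENNReal.le_of_forall_pos_le_add fun ε hε _ => ?_) (le_iInf hge)
  obtain ⟨i, hi⟩ := hle ε (NNReal.coe_pos.mpr hε)
  rw [ENNReal.ofReal_coe_nnreal] at hi
  exact (iInf_le f i).trans hi

section BridgeSeminorm

variable {A B : Type*} [Star A] [Star B]
  (LA : A → ℝ≥0∞) (LB : B → ℝ≥0∞) (N : A → B → ℝ)

def bridgeSeminorm (p : A × B) : ℝ≥0∞ :=
  max (max (LA p.1) (LB p.2))
    (max (ENNReal.ofReal (N p.1 p.2)) (ENNReal.ofReal (N (star p.1) (star p.2))))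

variable {LA LB N}

theorem le_bridgeSeminorm_left (p : A × B) : LA p.1 ≤ bridgeSeminorm LA LB N p :=
  le_max_of_le_left (le_max_left _ _)

theorem le_bridgeSeminorm_right (p : A × B) : LB p.2 ≤ bridgeSeminorm LA LB N p :=
  le_max_of_le_left (le_max_right _ _)

theorem bridgeSeminorm_of_isSelfAdjoint {a : A} {b : B} (ha : IsSelfAdjoint a)
    (hb : IsSelfAdjoint b) :
    bridgeSeminorm LA LB N (a, b) = max (max (LA a) (LB b)) (ENNReal.ofReal (N a b)) := by
  simp only [bridgeSeminorm, ha.star_eq, hb.star_eq, max_self]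

theorem iInf_bridgeSeminorm_eq_left {a : A} (ha : IsSelfAdjoint a)
    (hbridge : ∀ ε : ℝ, 0 < ε → ∃ b : B, IsSelfAdjoint b ∧
      max (LB b) (ENNReal.ofReal (N a b)) ≤ LA a + ENNReal.ofReal ε) :
    ⨅ b : B, bridgeSeminorm LA LB N (a, b) = LA a := by
  refine ENNReal.iInf_eq_of_forall_ge_of_forall_pos_exists_le_add
    (fun b => le_bridgeSeminorm_left (a, b)) fun ε hε => ?_
  obtain ⟨b, hb, hmax⟩ := hbridge ε hε
  refine ⟨b, ?_⟩
  rw [bridgeSeminorm_of_isSelfAdjoint ha hb, max_assoc]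
  exact max_le le_self_add hmax

theorem iInf_bridgeSeminorm_eq_right {b : B} (hb : IsSelfAdjoint b)
    (hbridge : ∀ ε : ℝ, 0 < ε → ∃ a : A, IsSelfAdjoint a ∧
      max (LA a) (ENNReal.ofReal (N a b)) ≤ LB b + ENNReal.ofReal ε) :
    ⨅ a : A, bridgeSeminorm LA LB N (a, b) = LB b := by
  refine ENNReal.iInf_eq_of_forall_ge_of_forall_pos_exists_le_add
    (fun a => le_bridgeSeminorm_right (a, b)) fun ε hε => ?_
  obtain ⟨a, ha, hmax⟩ := hbridge ε hε
  refine ⟨a, ?_⟩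
  rw [bridgeSeminorm_of_isSelfAdjoint ha hb, max_comm (LA a), max_assoc]
  exact max_le le_self_add hmax

end BridgeSeminorm

theorem bridge_quotients_selfAdjoint_general {A B : Type*}
    [NormedRing A] [StarRing A]
    [NormedRing B] [StarRing B]
    (LA : A → ℝ≥0∞) (LB : B → ℝ≥0∞)
    (N : A → B → ℝ)
    (hbridgeA : ∀ a : A, IsSelfAdjoint a → ∀ ε : ℝ, 0 < ε → ∃ b : B, IsSelfAdjoint b ∧
      max (LB b) (ENNReal.ofReal (N a b)) ≤ LA a + ENNReal.ofReal ε)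
    (hbridgeB : ∀ b : B, IsSelfAdjoint b → ∀ ε : ℝ, 0 < ε → ∃ a : A, IsSelfAdjoint a ∧
      max (LA a) (ENNReal.ofReal (N a b)) ≤ LB b + ENNReal.ofReal ε)
    (L : A × B → ℝ≥0∞)
    (hL : ∀ p : A × B, L p = max (max (LA p.1) (LB p.2))
      (max (ENNReal.ofReal (N p.1 p.2)) (ENNReal.ofReal (N (star p.1) (star p.2))))) :
    (∀ a : A, IsSelfAdjoint a → (⨅ b : B, L (a, b)) = LA a) ∧
    (∀ b : B, IsSelfAdjoint b → (⨅ a : A, L (a, b)) = LB b) := by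
  obtain rfl : L = bridgeSeminorm LA LB N := funext hL
  exact ⟨fun a ha => iInf_bridgeSeminorm_eq_left ha (hbridgeA a ha),
    fun b hb => iInf_bridgeSeminorm_eq_right hb (hbridgeB b hb)⟩

/-- Let `A`, `B` be unital C*-algebras with seminorms `L_A`, `L_B`, let `Ω` be a normed
`A`-`B`-bimodule with `ω₀ ≠ 0`, and set `N(a, b) = ‖a ω₀ − ω₀ b‖`.  If the bridge condition
holds, then for `L(a,b) = max(L_A(a), L_B(b), N(a,b), N(a*,b*))` the quotients of `L` agree
with `L_A` and `L_B` on self-adjoint elements. -/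
theorem bridge_quotients_selfAdjoint {A B : Type*}
    [NormedRing A] [StarRing A] [CStarRing A] [NormedAlgebra ℂ A] [StarModule ℂ A]
    [CompleteSpace A] [NormOneClass A]
    [NormedRing B] [StarRing B] [CStarRing B] [NormedAlgebra ℂ B] [StarModule ℂ B]
    [CompleteSpace B] [NormOneClass B]
    (LA : A → ℝ≥0∞) (LB : B → ℝ≥0∞) (hsemA : IsESeminorm LA) (hsemB : IsESeminorm LB)
    {Ω : Type*} [NormedAddCommGroup Ω]
    [Module A Ω] [Module Bᵐᵒᵖ Ω] [SMulCommClass A Bᵐᵒᵖ Ω]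
    (hnorm : ∀ (a : A) (ω : Ω) (b : B), ‖a • (op b • ω)‖ ≤ ‖a‖ * ‖ω‖ * ‖b‖)
    (ω₀ : Ω) (hω₀ : ω₀ ≠ 0)
    (N : A → B → ℝ) (hN : ∀ (a : A) (b : B), N a b = ‖a • ω₀ - op b • ω₀‖)
    (hbridgeA : ∀ a : A, IsSelfAdjoint a → ∀ ε : ℝ, 0 < ε → ∃ b : B, IsSelfAdjoint b ∧
      max (LB b) (ENNReal.ofReal (N a b)) ≤ LA a + ENNReal.ofReal ε)
    (hbridgeB : ∀ b : B, IsSelfAdjoint b → ∀ ε : ℝ, 0 < ε → ∃ a : A, IsSelfAdjoint a ∧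
      max (LA a) (ENNReal.ofReal (N a b)) ≤ LB b + ENNReal.ofReal ε)
    (L : A × B → ℝ≥0∞)
    (hL : ∀ p : A × B, L p = max (max (LA p.1) (LB p.2))
      (max (ENNReal.ofReal (N p.1 p.2)) (ENNReal.ofReal (N (star p.1) (star p.2))))) :
    (∀ a : A, IsSelfAdjoint a → (⨅ b : B, L (a, b)) = LA a) ∧
    (∀ b : B, IsSelfAdjoint b → (⨅ a : A, L (a, b)) = LB b) :=
  bridge_quotients_selfAdjoint_general LA LB N hbridgeA hbridgeB L hL
end

section
/- Let H be a finite-dimensional complex Hilbert space and let X be a compact Hausdorff space. Let p : X → B(H) be a continuous map such that for every x ∈ X, p(x) is a rank-one orthogonal projection. Define σ : B(H) → C(X) by (σ_T)(x) = tr(T·p(x)). Then for every f ∈ C(X) and T ∈ B(H), the operator norm of the linear map B(H) → C(X), S ↦ f·σ_S − σ_{TS} (where B(H) carries the operator norm and C(X) the supremum norm) equals sup{‖p(x)∘(f(x)·I − T)‖ : x ∈ X}, where ‖·‖ on the right is the operator norm on B(H). -/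
/-!
Each `p x` is `rankOne e e` for a unit vector `e`, so with `A = f x • 1 - T` the integrand
becomes `‖⟪A† e, S e⟫‖` and `p x ∘L A = rankOne e (A† e)` has norm `‖A† e‖`. For fixed `x` the
contraction `S = rankOne (A† e / ‖A† e‖) e` attains the bound `‖⟪A† e, S e⟫‖ ≤ ‖A† e‖`, so the
supremum over `S` can be taken pointwise in `x`.
-/

open InnerProductSpace Set

theorem Real.iSup_iSup_eq_iSup_of_isGreatest {ι X : Type*} {g : ι → X → ℝ} {h : X → ℝ}
    (hg : ∀ i x, 0 ≤ g i x) (hh : BddAbove (range h))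
    (hgh : ∀ x, IsGreatest (range fun i ↦ g i x) (h x)) :
    ⨆ i, ⨆ x, g i x = ⨆ x, h x := by
  have hh_nonneg : 0 ≤ ⨆ x, h x :=
    Real.iSup_nonneg fun x ↦ (hgh x).1.choose_spec ▸ hg _ x
  have hle : ∀ i, ⨆ x, g i x ≤ ⨆ x, h x := fun i ↦
    Real.iSup_le (fun x ↦ ((hgh x).2 ⟨i, rfl⟩).trans (le_ciSup hh x)) hh_nonneg
  refine le_antisymm (Real.iSup_le hle hh_nonneg)
    (Real.iSup_le (fun x ↦ ?_) (Real.iSup_nonneg fun i ↦ Real.iSup_nonneg (hg i)))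
  obtain ⟨i, hi⟩ := (hgh x).1
  obtain ⟨C, hC⟩ := hh
  have hg_bdd : BddAbove (range (g i)) :=
    ⟨C, forall_mem_range.2 fun x ↦ ((hgh x).2 ⟨i, rfl⟩).trans (hC ⟨x, rfl⟩)⟩
  calc h x = g i x := hi.symm
    _ ≤ ⨆ x, g i x := le_ciSup hg_bdd x
    _ ≤ ⨆ i, ⨆ x, g i x := le_ciSup ⟨_, forall_mem_range.2 hle⟩ i

section RankOne

variable {𝕜 E F : Type*} [RCLike 𝕜] [NormedAddCommGroup E] [InnerProductSpace 𝕜 E]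
  [NormedAddCommGroup F] [InnerProductSpace 𝕜 F]

theorem isGreatest_range_norm_inner_apply {e : E} (he : ‖e‖ = 1) (w : F) :
    IsGreatest (range fun S : {S : E →L[𝕜] F // ‖S‖ ≤ 1} ↦ ‖inner 𝕜 w ((S : E →L[𝕜] F) e)‖)
      ‖w‖ := by
  refine ⟨⟨⟨rankOne 𝕜 ((‖w‖⁻¹ : 𝕜) • w) e, ?_⟩, ?_⟩, forall_mem_range.2 fun S ↦ ?_⟩
  · rw [norm_rankOne, he, mul_one, norm_smul]
    simp [inv_mul_le_one]
  · simp [he, inner_smul_right, inner_self_eq_norm_sq_to_K, sq, ← mul_assoc]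
  · calc ‖inner 𝕜 w ((S : E →L[𝕜] F) e)‖ ≤ ‖w‖ * (‖(S : E →L[𝕜] F)‖ * ‖e‖) :=
          (norm_inner_le_norm _ _).trans (by gcongr; exact (S : E →L[𝕜] F).le_opNorm e)
      _ ≤ ‖w‖ := by rw [he, mul_one]; exact mul_le_of_le_one_right (norm_nonneg _) S.2

theorem IsStarProjection.exists_eq_rankOne_self [CompleteSpace E] {P : E →L[𝕜] E}
    (hP : IsStarProjection P) (hrank : Module.finrank 𝕜 (LinearMap.range (P : E →ₗ[𝕜] E)) = 1) :
    ∃ e : E, ‖e‖ = 1 ∧ P = rankOne 𝕜 e e := by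
  obtain ⟨K, _, rfl⟩ := isStarProjection_iff_eq_starProjection.1 hP
  rw [Submodule.range_starProjection] at hrank
  have : FiniteDimensional 𝕜 K := Module.finite_of_finrank_eq_succ hrank
  obtain ⟨v, hvK, hv0⟩ := Submodule.exists_mem_ne_zero_of_ne_bot (p := K)
    (by rintro rfl; simp at hrank)
  set e : E := (‖v‖⁻¹ : 𝕜) • v
  have he : ‖e‖ = 1 := norm_smul_inv_norm hv0
  have hK : 𝕜 ∙ e = K := Submodule.eq_of_le_of_finrank_eq
    (Submodule.span_le.2 (singleton_subset_iff.2 (K.smul_mem _ hvK)))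
    (by rw [finrank_span_singleton (norm_ne_zero_iff.1 (by simp [he])), hrank])
  subst hK
  refine ⟨e, he, ?_⟩
  ext w
  simp [Submodule.starProjection_singleton, he]

theorem trace_comp_rankOne [FiniteDimensional 𝕜 E] (S : E →L[𝕜] E) (x y : E) :
    LinearMap.trace 𝕜 E (S ∘L rankOne 𝕜 x y : E →L[𝕜] E) = inner 𝕜 y (S x) := by
  rw [comp_rankOne, trace_rankOne]

theorem mul_trace_comp_rankOne_sub_trace_comp_rankOne [FiniteDimensional 𝕜 E] [CompleteSpace E]
    (c : 𝕜) (T S : E →L[𝕜] E) (x y : E) :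
    c * LinearMap.trace 𝕜 E (S ∘L rankOne 𝕜 x y : E →L[𝕜] E)
      - LinearMap.trace 𝕜 E (T ∘L S ∘L rankOne 𝕜 x y : E →L[𝕜] E)
      = inner 𝕜 (ContinuousLinearMap.adjoint (c • 1 - T) y) (S x) := by
  rw [ContinuousLinearMap.adjoint_inner_left, ← ContinuousLinearMap.comp_assoc,
    trace_comp_rankOne, trace_comp_rankOne]
  simp [inner_sub_right, inner_smul_right]

theorem norm_rankOne_self_comp [CompleteSpace E] {e : E} (he : ‖e‖ = 1) (A : E →L[𝕜] E) :
    ‖rankOne 𝕜 e e ∘L A‖ = ‖ContinuousLinearMap.adjoint A e‖ := by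
  rw [rankOne_comp, norm_rankOne, he, one_mul]

end RankOne

theorem berezin_bridge_norm_general {H : Type*} [NormedAddCommGroup H] [InnerProductSpace ℂ H]
    [FiniteDimensional ℂ H]
    {X : Type*} [TopologicalSpace X] [CompactSpace X]
    (p : C(X, H →L[ℂ] H))
    (hproj : ∀ x : X, IsSelfAdjoint (p x) ∧ IsIdempotentElem (p x) ∧
      Module.finrank ℂ (LinearMap.range ((p x : H →L[ℂ] H) : H →ₗ[ℂ] H)) = 1)
    (f : C(X, ℂ)) (T : H →L[ℂ] H) :
    (⨆ S : {S : H →L[ℂ] H // ‖S‖ ≤ 1}, ⨆ x : X,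
        ‖f x * (LinearMap.trace ℂ H) ((((S : H →L[ℂ] H) ∘L p x) : H →L[ℂ] H) : H →ₗ[ℂ] H) -
          (LinearMap.trace ℂ H) (((T ∘L (S : H →L[ℂ] H) ∘L p x) : H →L[ℂ] H) : H →ₗ[ℂ] H)‖)
      = ⨆ x : X, ‖(p x) ∘L (f x • (1 : H →L[ℂ] H) - T)‖ := by
  choose e he hpe using fun x ↦
    IsStarProjection.exists_eq_rankOne_self ⟨(hproj x).2.1, (hproj x).1⟩ (hproj x).2.2
  refine Real.iSup_iSup_eq_iSup_of_isGreatest (fun _ _ ↦ norm_nonneg _)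
    (isCompact_range (by fun_prop)).bddAbove fun x ↦ ?_
  simp only [hpe x, mul_trace_comp_rankOne_sub_trace_comp_rankOne, norm_rankOne_self_comp (he x)]
  exact isGreatest_range_norm_inner_apply (he x) _

/-- Let `H` be a finite-dimensional complex Hilbert space, `X` a (nonempty) compact Hausdorff
space, and `p : X → B(H)` continuous with each `p(x)` a rank-one orthogonal projection.
Define the Berezin symbol `σ_T(x) = tr(T p(x))`.  Then the operator norm of the linear map
`S ↦ f σ_S − σ_{TS}` from `B(H)` to `C(X)` (expressed as a double supremum over the unit
ball of `B(H)` and over `X`) equals `sup_x ‖p(x) ∘ (f(x) I − T)‖`. -/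
theorem berezin_bridge_norm {H : Type*} [NormedAddCommGroup H] [InnerProductSpace ℂ H]
    [FiniteDimensional ℂ H]
    {X : Type*} [TopologicalSpace X] [CompactSpace X] [T2Space X] [Nonempty X]
    (p : C(X, H →L[ℂ] H))
    (hproj : ∀ x : X, IsSelfAdjoint (p x) ∧ IsIdempotentElem (p x) ∧
      Module.finrank ℂ (LinearMap.range ((p x : H →L[ℂ] H) : H →ₗ[ℂ] H)) = 1)
    (f : C(X, ℂ)) (T : H →L[ℂ] H) :
    (⨆ S : {S : H →L[ℂ] H // ‖S‖ ≤ 1}, ⨆ x : X,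
        ‖f x * (LinearMap.trace ℂ H) ((((S : H →L[ℂ] H) ∘L p x) : H →L[ℂ] H) : H →ₗ[ℂ] H) -
          (LinearMap.trace ℂ H) (((T ∘L (S : H →L[ℂ] H) ∘L p x) : H →L[ℂ] H) : H →ₗ[ℂ] H)‖)
      = ⨆ x : X, ‖(p x) ∘L (f x • (1 : H →L[ℂ] H) - T)‖ :=
  berezin_bridge_norm_general p hproj f T
end
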